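/- A self-similar set K ⊆ ℝ^k arising from a self-similar IFS satisfying the open set condition satisfies the local scaling property with respect to κ = dim_H(K)/k: there exist constants c₃, c₄, r₀ > 0 such that for all 0 < δ < r < r₀ and all x ∈ K, c₃ δ^{k − dim_H K} r^{dim_H K} ≤ L(B(x,r) ∩ Δ(K,δ)) ≤ c₄ δ^{k − dim_H K} r^{dim_H K}, where L denotes Lebesgue measure on ℝ^k. -/

import Mathlib

open Set MeasureTheory Metric Filter Topology ENNReal NNReal

noncomputable section

/-- The limsup of a sequence of sets: points belonging to infinitely many of them. -/
def limsupSet {X : Type*} (A : ℕ → Set X) : Set X :=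
  ⋂ N, ⋃ n, ⋃ (_ : N ≤ n), A n

/-- `s`-dimensional Hausdorff content, via covers by countably many closed balls. -/
def hContent {X : Type*} [PseudoMetricSpace X] (s : ℝ) (E : Set X) : ℝ≥0∞ :=
  ⨅ (c : ℕ → X) (r : ℕ → ℝ) (_ : ∀ n, 0 ≤ r n)
    (_ : E ⊆ ⋃ n, Metric.closedBall (c n) (r n)),
    ∑' n, ENNReal.ofReal (r n ^ s)

/-- A dimension function: continuous on `(0,∞)`, positive, tending to `0` at `0`. -/
def IsDimFun (f : ℝ → ℝ) : Prop :=
  ContinuousOn f (Set.Ioi 0) ∧ (∀ r > 0, 0 < f r) ∧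
    Filter.Tendsto f (nhdsWithin 0 (Set.Ioi 0)) (nhds 0)

/-- The `ρ`-approximate Hausdorff `f`-measure. -/
def preHausdorffF {X : Type*} [PseudoMetricSpace X] (f : ℝ → ℝ) (ρ : ℝ) (F : Set X) : ℝ≥0∞ :=
  ⨅ (c : ℕ → X) (r : ℕ → ℝ) (_ : ∀ n, 0 < r n ∧ r n < ρ)
    (_ : F ⊆ ⋃ n, Metric.ball (c n) (r n)),
    ∑' n, ENNReal.ofReal (f (r n))

/-- The Hausdorff `f`-measure, obtained as `ρ → 0` (equivalently, the supremum over `ρ > 0`). -/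
def hausdorffF {X : Type*} [PseudoMetricSpace X] (f : ℝ → ℝ) (F : Set X) : ℝ≥0∞ :=
  ⨆ (ρ : ℝ) (_ : 0 < ρ), preHausdorffF f ρ F

end


namespace Stmt14Aux

noncomputable section

variable {k n : ℕ}

/-- Composition of the IFS maps along a word (first letter outermost). -/
def Phi (φ : Fin n → (Fin k → ℝ) → (Fin k → ℝ)) : List (Fin n) → (Fin k → ℝ) → (Fin k → ℝ)
  | [] => id
  | i :: w => φ i ∘ Phi φ w

/-- Product of contraction ratios along a word. -/
def cw (c : Fin n → ℝ) (w : List (Fin n)) : ℝ := (w.map c).prod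

@[simp] lemma Phi_nil (φ : Fin n → (Fin k → ℝ) → (Fin k → ℝ)) : Phi φ [] = id := rfl

@[simp] lemma Phi_cons (φ : Fin n → (Fin k → ℝ) → (Fin k → ℝ)) (i : Fin n) (w : List (Fin n)) :
    Phi φ (i :: w) = φ i ∘ Phi φ w := rfl

lemma Phi_append (φ : Fin n → (Fin k → ℝ) → (Fin k → ℝ)) (v t : List (Fin n)) :
    Phi φ (v ++ t) = Phi φ v ∘ Phi φ t := by
  induction v with
  | nil => rfl
  | cons i v ih => simp [Phi, ih, Function.comp_assoc]

@[simp] lemma cw_nil (c : Fin n → ℝ) : cw c [] = 1 := rfl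

@[simp] lemma cw_cons (c : Fin n → ℝ) (i : Fin n) (w : List (Fin n)) :
    cw c (i :: w) = c i * cw c w := by simp [cw]

lemma cw_append (c : Fin n → ℝ) (v t : List (Fin n)) :
    cw c (v ++ t) = cw c v * cw c t := by simp [cw]

variable {φ : Fin n → (Fin k → ℝ) → (Fin k → ℝ)} {c : Fin n → ℝ}

lemma cw_pos (hc : ∀ i, 0 < c i ∧ c i < 1) (w : List (Fin n)) : 0 < cw c w := by
  induction w with
  | nil => simp
  | cons i w ih => simpa using mul_pos (hc i).1 ih

lemma cw_le_one (hc : ∀ i, 0 < c i ∧ c i < 1) (w : List (Fin n)) : cw c w ≤ 1 := by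
  induction w with
  | nil => simp
  | cons i w ih =>
    simp only [cw_cons]
    calc c i * cw c w ≤ 1 * 1 := by
          apply mul_le_mul (hc i).2.le ih (cw_pos hc w).le zero_le_one
      _ = 1 := by ring

lemma dist_Phi (hsim : ∀ i x y, dist (φ i x) (φ i y) = c i * dist x y)
    (w : List (Fin n)) (x y : Fin k → ℝ) :
    dist (Phi φ w x) (Phi φ w y) = cw c w * dist x y := by
  induction w with
  | nil => simp
  | cons i w ih => simp [hsim, ih, mul_assoc]

lemma Phi_injective (hc : ∀ i, 0 < c i ∧ c i < 1)
    (hsim : ∀ i x y, dist (φ i x) (φ i y) = c i * dist x y)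
    (w : List (Fin n)) : Function.Injective (Phi φ w) := by
  intro x y h
  have := dist_Phi hsim w x y
  rw [h, dist_self] at this
  have := (mul_eq_zero.1 this.symm).resolve_left (cw_pos hc w).ne'
  rwa [dist_eq_zero] at this

lemma Phi_image_subset {A : Set (Fin k → ℝ)} (hA : ∀ i, φ i '' A ⊆ A)
    (w : List (Fin n)) : Phi φ w '' A ⊆ A := by
  induction w with
  | nil => simp
  | cons i w ih =>
    rw [Phi_cons, Set.image_comp]
    exact (Set.image_mono ih).trans (hA i)

/-- Stopping words at scale `ρ`, with fuel `m`. -/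
def stopF (c : Fin n → ℝ) : ℕ → ℝ → Finset (List (Fin n))
  | 0, _ => {[]}
  | m + 1, ρ =>
    if 1 ≤ ρ then {[]}
    else Finset.univ.biUnion fun i : Fin n => (stopF c m (ρ / c i)).image (i :: ·)

@[simp] lemma stopF_zero (c : Fin n → ℝ) (ρ : ℝ) : stopF c 0 ρ = {[]} := rfl

lemma stopF_succ (c : Fin n → ℝ) (m : ℕ) (ρ : ℝ) :
    stopF c (m + 1) ρ = if 1 ≤ ρ then {[]}
      else Finset.univ.biUnion fun i : Fin n => (stopF c m (ρ / c i)).image (i :: ·) := rfl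

lemma mem_stopF_succ {m : ℕ} {ρ : ℝ} {w : List (Fin n)} (hρ : ¬ 1 ≤ ρ) :
    w ∈ stopF c (m + 1) ρ ↔ ∃ i w', w' ∈ stopF c m (ρ / c i) ∧ w = i :: w' := by
  rw [stopF_succ, if_neg hρ]
  simp only [Finset.mem_biUnion, Finset.mem_univ, Finset.mem_image, true_and]
  constructor
  · rintro ⟨i, w', h, rfl⟩; exact ⟨i, w', h, rfl⟩
  · rintro ⟨i, w', h, rfl⟩; exact ⟨i, w', h, rfl⟩

/-- Summation over the stopping set in the recursive case. -/
lemma sum_stopF_succ {M : Type*} [AddCommMonoid M] (f : List (Fin n) → M)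
    {m : ℕ} {ρ : ℝ} (hρ : ¬ 1 ≤ ρ) :
    ∑ w ∈ stopF c (m + 1) ρ, f w = ∑ i : Fin n, ∑ w' ∈ stopF c m (ρ / c i), f (i :: w') := by
  rw [stopF_succ, if_neg hρ, Finset.sum_biUnion]
  · refine Finset.sum_congr rfl fun i _ => ?_
    rw [Finset.sum_image]
    intro a _ b _ h
    simpa using h
  · intro i _ j _ hij
    simp only [Finset.disjoint_left, Finset.mem_image]
    rintro w ⟨a, _, rfl⟩ ⟨b, _, hab⟩
    exact hij (by simpa using (List.cons_eq_cons.mp hab.symm).1)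

lemma length_le_of_mem_stopF {m : ℕ} {ρ : ℝ} {w : List (Fin n)}
    (hw : w ∈ stopF c m ρ) : w.length ≤ m := by
  induction m generalizing ρ w with
  | zero => simp_all
  | succ m ih =>
    by_cases hρ : 1 ≤ ρ
    · rw [stopF_succ, if_pos hρ] at hw
      simp_all
    · obtain ⟨i, w', h, rfl⟩ := (mem_stopF_succ hρ).1 hw
      simpa using ih h

/-- Total mass of the stopping set is 1. -/
lemma sum_stopF_mass {s : ℝ} (hs : ∑ i : Fin n, c i ^ s = 1) (hc : ∀ i, 0 < c i ∧ c i < 1)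
    (m : ℕ) {ρ : ℝ} (hρ : 0 < ρ) :
    ∑ w ∈ stopF c m ρ, cw c w ^ s = 1 := by
  induction m generalizing ρ with
  | zero => simp [Real.one_rpow]
  | succ m ih =>
    by_cases h1 : 1 ≤ ρ
    · rw [stopF_succ, if_pos h1]; simp [Real.one_rpow]
    · rw [sum_stopF_succ _ h1]
      have : ∀ i : Fin n, ∑ w' ∈ stopF c m (ρ / c i), cw c (i :: w') ^ s = c i ^ s := by
        intro i
        have h2 : ∀ w' ∈ stopF c m (ρ / c i), cw c (i :: w') ^ s = c i ^ s * cw c w' ^ s := by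
          intro w' _
          rw [cw_cons, Real.mul_rpow (hc i).1.le (cw_pos hc w').le]
        rw [Finset.sum_congr rfl h2, ← Finset.mul_sum, ih (div_pos hρ (hc i).1), mul_one]
      rw [Finset.sum_congr rfl fun i _ => this i, hs]

/-- The stopping set covers `K`. -/
lemma stopF_covers {K : Set (Fin k → ℝ)}
    (hK : K = ⋃ i, φ i '' K) (m : ℕ) {ρ : ℝ} {x : Fin k → ℝ} (hx : x ∈ K) :
    ∃ w ∈ stopF c m ρ, x ∈ Phi φ w '' K := by
  induction m generalizing ρ x with
  | zero => exact ⟨[], by simp, by simpa using hx⟩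
  | succ m ih =>
    by_cases h1 : 1 ≤ ρ
    · exact ⟨[], by simp [stopF_succ, if_pos h1], by simpa using hx⟩
    · rw [hK] at hx
      obtain ⟨i, y, hy, rfl⟩ := by simpa using hx
      obtain ⟨w', hw', z, hz, hzy⟩ := ih (ρ := ρ / c i) hy
      exact ⟨i :: w', (mem_stopF_succ h1).2 ⟨i, w', hw', rfl⟩, z, hz, by simp [hzy]⟩

lemma cw_le_of_mem_stopF {a : ℝ} (hc : ∀ i, 0 < c i ∧ c i < 1) (ha : ∀ i, c i ≤ a)
    {m : ℕ} {ρ : ℝ} {w : List (Fin n)} (hw : w ∈ stopF c m ρ) :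
    cw c w ≤ max ρ (a ^ m) := by
  induction m generalizing ρ w with
  | zero =>
    simp only [stopF_zero, Finset.mem_singleton] at hw
    subst hw; simp
  | succ m ih =>
    by_cases h1 : 1 ≤ ρ
    · rw [stopF_succ, if_pos h1] at hw
      simp only [Finset.mem_singleton] at hw
      subst hw
      simpa using le_max_of_le_left h1
    · obtain ⟨i, w', h, rfl⟩ := (mem_stopF_succ h1).1 hw
      have := ih h
      rw [cw_cons]
      rcases max_cases (ρ / c i) (a ^ m) with ⟨he, _⟩ | ⟨he, _⟩
      · rw [he] at this
        have := mul_le_mul_of_nonneg_left this (hc i).1.le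
        rw [mul_div_cancel₀ _ (hc i).1.ne'] at this
        exact le_max_of_le_left this
      · rw [he] at this
        refine le_max_of_le_right ?_
        calc c i * cw c w' ≤ a * a ^ m := by
              apply mul_le_mul (ha i) this (cw_pos hc w').le
              exact le_trans (hc i).1.le (ha i)
          _ = a ^ (m + 1) := (pow_succ' a m).symm
lemma cw_prefix_gt {m : ℕ} {ρ : ℝ} {w : List (Fin n)} (hc : ∀ i, 0 < c i ∧ c i < 1)
    (hw : w ∈ stopF c m ρ) :
    ∀ u, u <+: w → u.length < w.length → ρ < cw c u := by
  induction m generalizing ρ w with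
  | zero =>
    simp only [stopF_zero, Finset.mem_singleton] at hw
    subst hw
    intro u hu hlen
    simp at hlen
  | succ m ih =>
    by_cases h1 : 1 ≤ ρ
    · rw [stopF_succ, if_pos h1] at hw
      simp only [Finset.mem_singleton] at hw
      subst hw
      intro u hu hlen
      simp at hlen
    · obtain ⟨i, w', h, rfl⟩ := (mem_stopF_succ h1).1 hw
      intro u hu hlen
      cases u with
      | nil => simpa using lt_of_not_ge h1
      | cons j u' =>
        obtain ⟨t, ht⟩ := hu
        simp only [List.cons_append, List.cons.injEq] at ht
        obtain ⟨rfl, ht⟩ := ht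
        have hu' : u' <+: w' := ⟨t, ht⟩
        have hlen' : u'.length < w'.length := by simpa using hlen
        have h2 := ih h u' hu' hlen'
        rw [cw_cons]
        calc ρ = c j * (ρ / c j) := (mul_div_cancel₀ _ (hc j).1.ne').symm
          _ < c j * cw c u' := mul_lt_mul_of_pos_left h2 (hc j).1
        
lemma le_cw_of_mem_stopF {b : ℝ} (hc : ∀ i, 0 < c i ∧ c i < 1) (hb : ∀ i, b ≤ c i)
    (hb0 : 0 < b) (hb1 : b ≤ 1) {m : ℕ} {ρ : ℝ} (hρ : 0 < ρ) {w : List (Fin n)}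
    (hw : w ∈ stopF c m ρ) :
    b * min ρ 1 ≤ cw c w := by
  rcases List.eq_nil_or_concat w with rfl | ⟨u, j, rfl⟩
  · simp only [cw_nil]
    calc b * min ρ 1 ≤ b * 1 := mul_le_mul_of_nonneg_left (min_le_right _ _) hb0.le
      _ ≤ 1 := by simpa using hb1
  · simp only [List.concat_eq_append] at hw ⊢
    have hpre : ρ < cw c u :=
      cw_prefix_gt hc hw u ⟨[j], by simp⟩ (by simp)
    have hcw : cw c (u ++ [j]) = cw c u * c j := by simp [cw_append]
    rw [hcw]
    calc b * min ρ 1 ≤ b * ρ := mul_le_mul_of_nonneg_left (min_le_left _ _) hb0.le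
      _ = ρ * b := mul_comm _ _
      _ ≤ cw c u * c j := mul_le_mul hpre.le (hb j) hb0.le (le_trans hρ.le hpre.le)

/-- Elements of a stopping set are pairwise non-prefix. -/
lemma stopF_prefix_eq {m : ℕ} {ρ : ℝ} {v w : List (Fin n)}
    (hv : v ∈ stopF c m ρ) (hw : w ∈ stopF c m ρ) (hvw : v <+: w) : v = w := by
  induction m generalizing ρ v w with
  | zero =>
    simp only [stopF_zero, Finset.mem_singleton] at hv hw
    rw [hv, hw]
  | succ m ih =>
    by_cases h1 : 1 ≤ ρ
    · rw [stopF_succ, if_pos h1] at hv hw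
      simp only [Finset.mem_singleton] at hv hw
      rw [hv, hw]
    · obtain ⟨i, v', h1v, rfl⟩ := (mem_stopF_succ h1).1 hv
      obtain ⟨j, w', h1w, rfl⟩ := (mem_stopF_succ h1).1 hw
      obtain ⟨t, ht⟩ := hvw
      simp only [List.cons_append, List.cons.injEq] at ht
      obtain ⟨rfl, ht⟩ := ht
      rw [ih h1v h1w ⟨t, ht⟩]

/-- Mass of descendants of a word `v` all of whose proper prefixes are above scale. -/
lemma sum_stopF_desc {s : ℝ} (hs : ∑ i : Fin n, c i ^ s = 1) (hc : ∀ i, 0 < c i ∧ c i < 1)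
    (v : List (Fin n)) :
    ∀ m ρ, 0 < ρ → v.length ≤ m → (∀ u, u <+: v → u.length < v.length → ρ < cw c u) →
    ∑ w ∈ (stopF c m ρ).filter (fun w => v <+: w), cw c w ^ s = cw c v ^ s := by
  classical
  induction v with
  | nil =>
    intro m ρ hρ _ _
    have : (stopF c m ρ).filter (fun w => [] <+: w) = stopF c m ρ := by
      apply Finset.filter_true_of_mem
      intro w _; exact List.nil_prefix
    rw [this, sum_stopF_mass hs hc m hρ]
    simp [Real.one_rpow]
  | cons i v' ih =>
    intro m ρ hρ hlen hpre
    have hρ1 : ρ < 1 := by simpa using hpre [] List.nil_prefix (by simp)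
    obtain ⟨m', rfl⟩ : ∃ m', m = m' + 1 := by
      cases m with
      | zero => exact absurd hlen (by simp)
      | succ m' => exact ⟨m', rfl⟩
    have h1 : ¬ 1 ≤ ρ := not_le.2 hρ1
    -- reduce the filtered sum over the successor stopping set
    rw [Finset.sum_filter, sum_stopF_succ _ h1]
    have key : ∀ j : Fin n, ∑ w' ∈ stopF c m' (ρ / c j),
        (if (i :: v') <+: (j :: w') then cw c (j :: w') ^ s else 0)
        = if j = i then c i ^ s * cw c v' ^ s else 0 := by
      intro j
      by_cases hij : j = i
      · subst hij
        have hpr : ∀ w' : List (Fin n), ((j :: v') <+: (j :: w')) ↔ v' <+: w' := by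
          intro w'
          constructor
          · rintro ⟨t, ht⟩
            simp only [List.cons_append, List.cons.injEq] at ht
            exact ⟨t, ht.2⟩
          · rintro ⟨t, ht⟩
            exact ⟨t, by simp [ht]⟩
        have hih := ih m' (ρ / c j) (div_pos hρ (hc j).1) (by simpa using hlen)
          (fun u hu hul => by
            have hju : (j :: u) <+: (j :: v') := by
              obtain ⟨t, ht⟩ := hu
              exact ⟨t, by simp [ht]⟩
            have := hpre (j :: u) hju (by simpa using hul)
            rw [cw_cons] at this
            rw [div_lt_iff₀ (hc j).1, mul_comm]
            exact this)
        simp only [hpr, if_pos]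
        calc ∑ w' ∈ stopF c m' (ρ / c j),
              (if v' <+: w' then cw c (j :: w') ^ s else 0)
            = ∑ w' ∈ stopF c m' (ρ / c j),
              c j ^ s * (if v' <+: w' then cw c w' ^ s else 0) := by
              refine Finset.sum_congr rfl fun w' _ => ?_
              by_cases hvw : v' <+: w'
              · rw [if_pos hvw, if_pos hvw, cw_cons,
                  Real.mul_rpow (hc j).1.le (cw_pos hc _).le]
              · rw [if_neg hvw, if_neg hvw, mul_zero]
          _ = c j ^ s * ∑ w' ∈ (stopF c m' (ρ / c j)).filter (fun w' => v' <+: w'),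
              cw c w' ^ s := by rw [← Finset.mul_sum, Finset.sum_filter]
          _ = c j ^ s * cw c v' ^ s := by rw [hih]
      · have : ∀ w' : List (Fin n), ¬ ((i :: v') <+: (j :: w')) := by
          intro w' hp
          obtain ⟨t, ht⟩ := hp
          simp only [List.cons_append, List.cons.injEq] at ht
          exact hij ht.1.symm
        simp [this, hij]
    rw [Finset.sum_congr rfl fun j _ => key j]
    rw [Finset.sum_ite_eq' Finset.univ i (fun _ => c i ^ s * cw c v' ^ s)]
    simp [cw_cons, Real.mul_rpow (hc i).1.le (cw_pos hc _).le]

open scoped Classical in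
lemma filter_sum_stopF_succ {s : ℝ} (hc : ∀ i, 0 < c i ∧ c i < 1)
    (P : List (Fin n) → Prop) {m : ℕ} {σ : ℝ} (hσ : ¬ 1 ≤ σ) :
    ∑ w ∈ (stopF c (m + 1) σ).filter (fun w => P w), cw c w ^ s
      = ∑ i : Fin n, c i ^ s *
          ∑ w' ∈ (stopF c m (σ / c i)).filter (fun w' => P (i :: w')), cw c w' ^ s := by
  rw [Finset.sum_filter, sum_stopF_succ _ hσ]
  refine Finset.sum_congr rfl fun i _ => ?_
  rw [Finset.sum_filter, Finset.mul_sum]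
  refine Finset.sum_congr rfl fun w' _ => ?_
  by_cases hP : P (i :: w')
  · rw [if_pos hP, if_pos hP, cw_cons, Real.mul_rpow (hc i).1.le (cw_pos hc _).le]
  · rw [if_neg hP, if_neg hP, mul_zero]

open scoped Classical in
/-- Key comparison: the mass of small stopping cylinders meeting a set of diameter `≤ 2ρ`
is at most the mass of scale-`ρ` stopping cylinders meeting it. -/
lemma sum_mass_le_sum_mass {s : ℝ} (hs : ∑ i : Fin n, c i ^ s = 1)
    (hc : ∀ i, 0 < c i ∧ c i < 1)
    (hsim : ∀ i x y, dist (φ i x) (φ i y) = c i * dist x y)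
    {K : Set (Fin k → ℝ)} (hKsub : ∀ i, φ i '' K ⊆ K) :
    ∀ (m : ℕ) (δ ρ : ℝ) (T : Set (Fin k → ℝ)), 0 < δ → δ ≤ ρ →
      (∀ y ∈ T, ∀ z ∈ T, dist y z ≤ 2 * ρ) →
      ∑ w ∈ (stopF c m δ).filter (fun w => (Phi φ w '' K ∩ T).Nonempty), cw c w ^ s
        ≤ ∑ v ∈ (stopF c m ρ).filter (fun v => (Phi φ v '' K ∩ T).Nonempty), cw c v ^ s := by
  intro m
  induction m with
  | zero => intro δ ρ T hδ hδρ hT; simp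
  | succ m ih =>
    intro δ ρ T hδ hδρ hT
    by_cases hδ1 : 1 ≤ δ
    · have hρ1 : 1 ≤ ρ := le_trans hδ1 hδρ
      rw [stopF_succ, if_pos hδ1, stopF_succ, if_pos hρ1]
    · by_cases hρ1 : 1 ≤ ρ
      · -- RHS ranges over {[]}
        rw [stopF_succ _ _ ρ, if_pos hρ1]
        by_cases hKT : (K ∩ T).Nonempty
        · have h2 : ({[]} : Finset (List (Fin n))).filter
              (fun v => (Phi φ v '' K ∩ T).Nonempty) = {[]} := by
            apply Finset.filter_true_of_mem
            intro v hv
            simp only [Finset.mem_singleton] at hv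
            subst hv
            simpa using hKT
          rw [h2]
          simp only [Finset.sum_singleton, cw_nil, Real.one_rpow]
          calc ∑ w ∈ (stopF c (m+1) δ).filter (fun w => (Phi φ w '' K ∩ T).Nonempty),
                cw c w ^ s
              ≤ ∑ w ∈ stopF c (m+1) δ, cw c w ^ s := by
                apply Finset.sum_le_sum_of_subset_of_nonneg (Finset.filter_subset _ _)
                intro w _ _
                exact Real.rpow_nonneg (cw_pos hc w).le s
            _ = 1 := sum_stopF_mass hs hc _ hδ
        · have h0 : ∀ w : List (Fin n), ¬ (Phi φ w '' K ∩ T).Nonempty := by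
            intro w hne
            exact hKT (hne.mono (inter_subset_inter_left T (Phi_image_subset hKsub w)))
          simp [Finset.filter_eq_empty_iff.2 fun w _ => h0 w, h0]
      · -- both scales < 1
        rw [filter_sum_stopF_succ hc _ hδ1, filter_sum_stopF_succ hc _ hρ1]
        refine Finset.sum_le_sum fun i _ => ?_
        refine mul_le_mul_of_nonneg_left ?_ (Real.rpow_nonneg (hc i).1.le s)
        have hcond : ∀ w' : List (Fin n),
            (Phi φ (i :: w') '' K ∩ T).Nonempty ↔ (Phi φ w' '' K ∩ φ i ⁻¹' T).Nonempty := by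
          intro w'
          constructor
          · rintro ⟨y, ⟨x, hx, rfl⟩, hyT⟩
            exact ⟨Phi φ w' x, ⟨x, hx, rfl⟩, hyT⟩
          · rintro ⟨y, ⟨x, hx, rfl⟩, hyT⟩
            exact ⟨φ i (Phi φ w' x), ⟨x, hx, rfl⟩, hyT⟩
        simp only [hcond]
        refine ih (δ / c i) (ρ / c i) (φ i ⁻¹' T) (div_pos hδ (hc i).1)
          (by gcongr; exact (hc i).1.le) ?_
        intro y hy z hz
        have h3 := hT _ hy _ hz
        have h4 : dist (φ i y) (φ i z) = c i * dist y z := hsim i y z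
        have h5 : c i * dist y z ≤ 2 * ρ := h4 ▸ h3
        have h6 : dist y z ≤ 2 * ρ / c i := (le_div_iff₀ (hc i).1).2 (by nlinarith)
        rw [mul_div_assoc] at h6
        exact h6

lemma phi_inj (hc : ∀ i, 0 < c i ∧ c i < 1)
    (hsim : ∀ i x y, dist (φ i x) (φ i y) = c i * dist x y) (i : Fin n) :
    Function.Injective (φ i) := by
  intro x y h
  have h2 := hsim i x y
  rw [h, dist_self] at h2
  have := (mul_eq_zero.1 h2.symm).resolve_left (hc i).1.ne'
  rwa [dist_eq_zero] at this

lemma phi_lipschitz (hc : ∀ i, 0 < c i ∧ c i < 1)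
    (hsim : ∀ i x y, dist (φ i x) (φ i y) = c i * dist x y) (i : Fin n) :
    LipschitzWith (c i).toNNReal (φ i) := by
  apply LipschitzWith.of_dist_le_mul
  intro x y
  rw [hsim i x y, Real.coe_toNNReal _ (hc i).1.le]

lemma closure_invariant (hc : ∀ i, 0 < c i ∧ c i < 1)
    (hsim : ∀ i x y, dist (φ i x) (φ i y) = c i * dist x y)
    {U : Set (Fin k → ℝ)} (hUinv : ∀ i, φ i '' U ⊆ U) (i : Fin n) :
    φ i '' closure U ⊆ closure U :=
  (image_closure_subset_closure_image (phi_lipschitz hc hsim i).continuous).trans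
    (closure_mono (hUinv i))

lemma cover_len {K : Set (Fin k → ℝ)} (hK : K = ⋃ i, φ i '' K) (m : ℕ)
    {x : Fin k → ℝ} (hx : x ∈ K) : ∃ w : List (Fin n), w.length = m ∧ x ∈ Phi φ w '' K := by
  induction m generalizing x with
  | zero => exact ⟨[], rfl, by simpa using hx⟩
  | succ m ih =>
    rw [hK] at hx
    obtain ⟨i, y, hy, rfl⟩ := by simpa using hx
    obtain ⟨w, hw, z, hz, hzy⟩ := ih hy
    exact ⟨i :: w, by simp [hw], z, hz, by simp [hzy]⟩

lemma cw_le_pow_len {a : ℝ} (hc : ∀ i, 0 < c i ∧ c i < 1) (ha : ∀ i, c i ≤ a)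
    (w : List (Fin n)) : cw c w ≤ a ^ w.length := by
  induction w with
  | nil => simp
  | cons i w ih =>
    rw [cw_cons, List.length_cons, pow_succ']
    exact mul_le_mul (ha i) ih (cw_pos hc w).le ((hc i).1.le.trans (ha i))

lemma K_subset_closureU {a : ℝ} (hc : ∀ i, 0 < c i ∧ c i < 1) (ha : ∀ i, c i ≤ a)
    (ha0 : 0 ≤ a) (ha1 : a < 1)
    (hsim : ∀ i x y, dist (φ i x) (φ i y) = c i * dist x y)
    {U : Set (Fin k → ℝ)} (hUne : U.Nonempty) (hUinv : ∀ i, φ i '' U ⊆ U)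
    {K : Set (Fin k → ℝ)} (hKb : Bornology.IsBounded K) (hK : K = ⋃ i, φ i '' K) :
    K ⊆ closure U := by
  obtain ⟨u, hu⟩ := hUne
  obtain ⟨R₀, hR₀⟩ := (Bornology.IsBounded.subset_closedBall hKb u)
  set R := max R₀ 1 with hRdef
  have hR : K ⊆ closedBall u R := hR₀.trans (closedBall_subset_closedBall (le_max_left _ _))
  have hR' : (0:ℝ) < R := lt_of_lt_of_le one_pos (le_max_right _ _)
  intro x hx
  have hcl : ∀ w : List (Fin n), Phi φ w u ∈ closure U := by
    intro w
    have := Phi_image_subset (A := closure U) (closure_invariant hc hsim hUinv) w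
    exact this ⟨u, subset_closure hu, rfl⟩
  rw [← closure_closure (s := U), Metric.mem_closure_iff]
  intro ε hε
  obtain ⟨m, hm⟩ := exists_pow_lt_of_lt_one (div_pos hε hR') ha1
  obtain ⟨w, hwlen, y, hy, hyx⟩ := cover_len hK m hx
  refine ⟨Phi φ w u, hcl w, ?_⟩
  have h1 : dist x (Phi φ w u) = cw c w * dist y u := by
    rw [← hyx]; exact dist_Phi hsim w y u
  have h2 : dist y u ≤ R := by simpa using hR hy
  have h3 : cw c w ≤ a ^ m := hwlen ▸ cw_le_pow_len hc ha w
  calc dist x (Phi φ w u) = cw c w * dist y u := h1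
    _ ≤ a ^ m * R := mul_le_mul h3 h2 dist_nonneg (pow_nonneg ha0 m)
    _ < (ε / R) * R := mul_lt_mul_of_pos_right hm hR'
    _ = ε := div_mul_cancel₀ _ hR'.ne'

/-- OSC disjointness for incomparable words. -/
lemma Phi_disjoint (hc : ∀ i, 0 < c i ∧ c i < 1)
    (hsim : ∀ i x y, dist (φ i x) (φ i y) = c i * dist x y)
    {U : Set (Fin k → ℝ)} (hUinv : ∀ i, φ i '' U ⊆ U)
    (hdisj : ∀ i j, i ≠ j → Disjoint (φ i '' U) (φ j '' U)) :
    ∀ v w : List (Fin n), ¬ v <+: w → ¬ w <+: v →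
      Disjoint (Phi φ v '' U) (Phi φ w '' U) := by
  intro v
  induction v with
  | nil => intro w hvw _; exact absurd (List.nil_prefix) hvw
  | cons i v' ih =>
    intro w hvw hwv
    cases w with
    | nil => exact absurd (List.nil_prefix) hwv
    | cons j w' =>
      by_cases hij : i = j
      · subst hij
        have hv'w' : ¬ v' <+: w' := fun h => hvw (List.cons_prefix_cons.2 ⟨rfl, h⟩)
        have hw'v' : ¬ w' <+: v' := fun h => hwv (List.cons_prefix_cons.2 ⟨rfl, h⟩)
        have hd := ih w' hv'w' hw'v'
        rw [Phi_cons, Phi_cons, Set.image_comp, Set.image_comp]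
        exact (Set.disjoint_image_iff (phi_inj hc hsim i)).2 hd
      · rw [Phi_cons, Phi_cons, Set.image_comp, Set.image_comp]
        refine Set.disjoint_of_subset ?_ ?_ (hdisj i j hij)
        · exact Set.image_mono (Phi_image_subset hUinv v')
        · exact Set.image_mono (Phi_image_subset hUinv w')

/-- Lower bound for the volume of the image of a set under a similarity. -/
lemma vol_image_ge {t : ℝ} (ht : 0 < t) {f : (Fin k → ℝ) → (Fin k → ℝ)}
    (hf : ∀ x y, dist (f x) (f y) = t * dist x y) (A : Set (Fin k → ℝ)) :
    ENNReal.ofReal (t ^ k) * volume A ≤ volume (f '' A) := by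
  have hinj : Function.Injective f := by
    intro x y h
    have h2 := hf x y
    rw [h, dist_self] at h2
    have := (mul_eq_zero.1 h2.symm).resolve_left ht.ne'
    rwa [dist_eq_zero] at this
  set g := Function.invFun f with hg
  have hgf : ∀ x, g (f x) = x := fun x => Function.leftInverse_invFun hinj x
  have hlip : LipschitzOnWith (t⁻¹).toNNReal g (f '' A) := by
    rw [lipschitzOnWith_iff_dist_le_mul]
    rintro y₁ ⟨x₁, hx₁, rfl⟩ y₂ ⟨x₂, hx₂, rfl⟩
    rw [hgf, hgf, Real.coe_toNNReal _ (inv_nonneg.2 ht.le), hf x₁ x₂]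
    rw [← mul_assoc, inv_mul_cancel₀ ht.ne', one_mul]
  have h1 := hlip.hausdorffMeasure_image_le (d := (k : ℝ)) (by positivity)
  have h2 : g '' (f '' A) = A := by
    rw [← Set.image_comp]
    simp [Function.comp, hgf]
  rw [h2] at h1
  have hvol : (μH[(k:ℝ)] : Measure (Fin k → ℝ)) = volume := by
    have := hausdorffMeasure_pi_real (ι := Fin k)
    rwa [Fintype.card_fin] at this
  rw [hvol] at h1
  -- h1 : volume A ≤ (t⁻¹.toNNReal : ℝ≥0∞) ^ (k:ℝ) * volume (f '' A)
  have hconv : (ENNReal.ofReal (t ^ k)) * ((t⁻¹.toNNReal : ℝ≥0∞) ^ (k : ℝ)) = 1 := by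
    rw [ENNReal.rpow_natCast]
    have : ((t⁻¹.toNNReal : ℝ≥0∞)) = ENNReal.ofReal t⁻¹ := rfl
    rw [this, ← ENNReal.ofReal_pow (inv_nonneg.2 ht.le), ← ENNReal.ofReal_mul (by positivity)]
    rw [← mul_pow, mul_inv_cancel₀ ht.ne', one_pow, ENNReal.ofReal_one]
  calc ENNReal.ofReal (t ^ k) * volume A
      ≤ ENNReal.ofReal (t ^ k) * ((t⁻¹.toNNReal : ℝ≥0∞) ^ (k : ℝ) * volume (f '' A)) :=
        mul_le_mul_right h1 _
    _ = (ENNReal.ofReal (t ^ k) * (t⁻¹.toNNReal : ℝ≥0∞) ^ (k : ℝ)) * volume (f '' A) := by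
        rw [mul_assoc]
    _ = volume (f '' A) := by rw [hconv, one_mul]

/-- Counting disjoint sets of definite volume inside a large set. -/
lemma card_le_of_disjoint {ι : Type*} [DecidableEq ι] (V : Finset ι) (P : ι → Set (Fin k → ℝ))
    (hmeas : ∀ i ∈ V, MeasurableSet (P i)) (hdisj : (V : Set ι).PairwiseDisjoint P)
    {α β : ℝ} (hα : 0 < α) (hβ : 0 ≤ β) (hv : ∀ i ∈ V, ENNReal.ofReal α ≤ volume (P i))
    {B : Set (Fin k → ℝ)} (hsub : ∀ i ∈ V, P i ⊆ B) (hB : volume B ≤ ENNReal.ofReal β) :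
    (V.card : ℝ) * α ≤ β := by
  have key : (V.card : ℝ≥0∞) * ENNReal.ofReal α ≤ ENNReal.ofReal β := by
    calc (V.card : ℝ≥0∞) * ENNReal.ofReal α = V.card • ENNReal.ofReal α := by
          rw [nsmul_eq_mul]
      _ ≤ ∑ i ∈ V, volume (P i) := Finset.card_nsmul_le_sum V _ _ hv
      _ = volume (⋃ i ∈ V, P i) := (measure_biUnion_finset hdisj hmeas).symm
      _ ≤ volume B := measure_mono (Set.iUnion₂_subset hsub)
      _ ≤ ENNReal.ofReal β := hB
  have h2 : ENNReal.ofReal ((V.card : ℝ) * α) ≤ ENNReal.ofReal β := by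
    rwa [ENNReal.ofReal_mul (by positivity), ENNReal.ofReal_natCast]
  rwa [ENNReal.ofReal_le_ofReal_iff hβ] at h2

lemma Phi_continuous (hc : ∀ i, 0 < c i ∧ c i < 1)
    (hsim : ∀ i x y, dist (φ i x) (φ i y) = c i * dist x y) (w : List (Fin n)) :
    Continuous (Phi φ w) := by
  induction w with
  | nil => exact continuous_id
  | cons i w ih => exact ((phi_lipschitz hc hsim i).continuous).comp ih

open scoped Classical in
/-- Master upper bound: total mass of `δ`-stopping cylinders meeting a ball of radius `ρ`. -/
lemma mass_ball_bound {s a b ε DU : ℝ} {U K : Set (Fin k → ℝ)} {u₀ : Fin k → ℝ}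
    (hs : ∑ i : Fin n, c i ^ s = 1) (hs0 : 0 ≤ s)
    (hc : ∀ i, 0 < c i ∧ c i < 1)
    (hsim : ∀ i x y, dist (φ i x) (φ i y) = c i * dist x y)
    (ha : ∀ i, c i ≤ a) (hb : ∀ i, b ≤ c i) (hb0 : 0 < b) (hb1 : b ≤ 1)
    (hUinv : ∀ i, φ i '' U ⊆ U) (hdisj : ∀ i j, i ≠ j → Disjoint (φ i '' U) (φ j '' U))
    (hε : 0 < ε) (hUc : closedBall u₀ ε ⊆ U)
    (hDU : ∀ x ∈ closure U, ∀ y ∈ closure U, dist x y ≤ DU)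
    (hKsub : ∀ i, φ i '' K ⊆ K) (hKclU : K ⊆ closure U)
    (m : ℕ) (δ ρ : ℝ) (hδ : 0 < δ) (hδρ : δ ≤ ρ) (hρ1 : ρ < 1) (hfuel : a ^ m ≤ δ)
    (x : Fin k → ℝ) :
    ∑ w ∈ (stopF c m δ).filter
        (fun w => (Phi φ w '' K ∩ closedBall x ρ).Nonempty), cw c w ^ s
      ≤ ((1 + DU) / (b * ε)) ^ k * ρ ^ s := by
  have hρ0 : 0 < ρ := lt_of_lt_of_le hδ hδρ
  have hu₀U : u₀ ∈ closure U := subset_closure (hUc (mem_closedBall_self hε.le))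
  have hDU0 : 0 ≤ DU := by simpa using hDU u₀ hu₀U u₀ hu₀U
  -- Step 1: compare with the scale-ρ stopping set
  have step1 := sum_mass_le_sum_mass hs hc hsim hKsub m δ ρ (closedBall x ρ) hδ hδρ
    (fun y hy z hz => by
      have h1 : dist y x ≤ ρ := mem_closedBall.1 hy
      have h2 : dist z x ≤ ρ := mem_closedBall.1 hz
      calc dist y z ≤ dist y x + dist x z := dist_triangle _ _ _
        _ ≤ 2 * ρ := by rw [dist_comm x z]; linarith)
  set V := (stopF c m ρ).filter
    (fun v => (Phi φ v '' K ∩ closedBall x ρ).Nonempty) with hV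
  -- scale bounds for members of V
  have hcw_le : ∀ v ∈ V, cw c v ≤ ρ := by
    intro v hv
    have := cw_le_of_mem_stopF hc ha (Finset.mem_of_mem_filter v hv)
    rwa [max_eq_left (le_trans hfuel hδρ)] at this
  have hcw_ge : ∀ v ∈ V, b * ρ ≤ cw c v := by
    intro v hv
    have := le_cw_of_mem_stopF hc hb hb0 hb1 hρ0 (Finset.mem_of_mem_filter v hv)
    rwa [min_eq_left hρ1.le] at this
  -- Step 2: count V
  have hcard : (V.card : ℝ) * ((b * ρ) ^ k * (2 * ε) ^ k)
      ≤ (2 * (ρ * (1 + DU))) ^ k := by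
    refine card_le_of_disjoint V (fun v => Phi φ v '' closedBall u₀ ε) ?_ ?_
      (by positivity) (by positivity) ?_ (B := closedBall x (ρ * (1 + DU))) ?_ ?_
    · intro v _
      exact ((isCompact_closedBall u₀ ε).image (Phi_continuous hc hsim v)).measurableSet
    · intro v hv v' hv' hne
      have h1 : ¬ v <+: v' := fun h => hne (stopF_prefix_eq
        (Finset.mem_of_mem_filter v hv) (Finset.mem_of_mem_filter v' hv') h)
      have h2 : ¬ v' <+: v := fun h => hne (stopF_prefix_eq
        (Finset.mem_of_mem_filter v' hv') (Finset.mem_of_mem_filter v hv) h).symm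
      exact Set.disjoint_of_subset (Set.image_mono hUc) (Set.image_mono hUc)
        (Phi_disjoint hc hsim hUinv hdisj v v' h1 h2)
    · intro v hv
      have h1 := vol_image_ge (cw_pos hc v) (dist_Phi hsim v) (closedBall u₀ ε)
      have h2 : volume (closedBall u₀ ε) = ENNReal.ofReal ((2 * ε) ^ k) := by
        rw [Real.volume_pi_closedBall u₀ hε.le, Fintype.card_fin]
      rw [h2] at h1
      refine le_trans ?_ h1
      rw [← ENNReal.ofReal_mul (pow_nonneg (cw_pos hc v).le k)]
      apply ENNReal.ofReal_le_ofReal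
      apply mul_le_mul_of_nonneg_right _ (by positivity)
      exact pow_le_pow_left₀ (by positivity) (hcw_ge v hv) k
    · intro v hv
      obtain ⟨z, ⟨zK, hzK, rfl⟩, hzball⟩ := (Finset.mem_filter.1 hv).2
      rintro p ⟨u, hu, rfl⟩
      have hdist : dist (Phi φ v u) (Phi φ v zK) = cw c v * dist u zK :=
        dist_Phi hsim v u zK
      have huU : u ∈ closure U := subset_closure (hUc hu)
      have hzKU : zK ∈ closure U := hKclU hzK
      have h3 : dist u zK ≤ DU := hDU u huU zK hzKU
      have h4 : dist (Phi φ v u) (Phi φ v zK) ≤ ρ * DU := by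
        rw [hdist]
        exact mul_le_mul (hcw_le v hv) h3 dist_nonneg hρ0.le
      have h5 : dist (Phi φ v zK) x ≤ ρ := mem_closedBall.1 hzball
      rw [mem_closedBall]
      calc dist (Phi φ v u) x ≤ dist (Phi φ v u) (Phi φ v zK) + dist (Phi φ v zK) x :=
            dist_triangle _ _ _
        _ ≤ ρ * DU + ρ := add_le_add h4 h5
        _ = ρ * (1 + DU) := by ring
    · rw [Real.volume_pi_closedBall x (by positivity), Fintype.card_fin]
  -- Step 3: conclude
  have hMα : (2 * (ρ * (1 + DU))) ^ k
      = ((1 + DU) / (b * ε)) ^ k * ((b * ρ) ^ k * (2 * ε) ^ k) := by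
    rw [← mul_pow, ← mul_pow]
    congr 1
    field_simp
  have hcard2 : (V.card : ℝ) ≤ ((1 + DU) / (b * ε)) ^ k := by
    rw [hMα] at hcard
    have hpos : (0:ℝ) < (b * ρ) ^ k * (2 * ε) ^ k := by positivity
    exact le_of_mul_le_mul_right hcard hpos
  calc ∑ w ∈ (stopF c m δ).filter
        (fun w => (Phi φ w '' K ∩ closedBall x ρ).Nonempty), cw c w ^ s
      ≤ ∑ v ∈ V, cw c v ^ s := step1
    _ ≤ ∑ _v ∈ V, ρ ^ s := by
        refine Finset.sum_le_sum fun v hv => ?_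
        exact Real.rpow_le_rpow (cw_pos hc v).le (hcw_le v hv) hs0
    _ = (V.card : ℝ) * ρ ^ s := by rw [Finset.sum_const, nsmul_eq_mul]
    _ ≤ ((1 + DU) / (b * ε)) ^ k * ρ ^ s := by
        apply mul_le_mul_of_nonneg_right hcard2 (Real.rpow_nonneg hρ0.le s)

lemma ediam_cylinder_le {K : Set (Fin k → ℝ)} (hKb : Bornology.IsBounded K)
    (hc : ∀ i, 0 < c i ∧ c i < 1)
    (hsim : ∀ i x y, dist (φ i x) (φ i y) = c i * dist x y)
    (w : List (Fin n)) :
    EMetric.diam (Phi φ w '' K) ≤ ENNReal.ofReal (cw c w * Metric.diam K) := by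
  apply EMetric.diam_le
  rintro p ⟨y, hy, rfl⟩ q ⟨z, hz, rfl⟩
  rw [edist_dist, dist_Phi hsim w y z]
  apply ENNReal.ofReal_le_ofReal
  exact mul_le_mul_of_nonneg_left (Metric.dist_le_diam_of_mem hKb hy hz) (cw_pos hc w).le

lemma hausdorff_upper {s a : ℝ} {K : Set (Fin k → ℝ)}
    (hs : ∑ i : Fin n, c i ^ s = 1) (hs0 : 0 ≤ s)
    (hc : ∀ i, 0 < c i ∧ c i < 1)
    (hsim : ∀ i x y, dist (φ i x) (φ i y) = c i * dist x y)
    (ha : ∀ i, c i ≤ a) (ha0 : 0 < a) (ha1 : a < 1)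
    (hKb : Bornology.IsBounded K) (hK : K = ⋃ i, φ i '' K) :
    μH[s] K ≤ ENNReal.ofReal (Metric.diam K ^ s) := by
  classical
  set dK := Metric.diam K with hdK
  have hdK0 : 0 ≤ dK := Metric.diam_nonneg
  have hbound := MeasureTheory.Measure.hausdorffMeasure_le_liminf_sum (ι := fun j : ℕ => {w // w ∈ stopF c j (a ^ j)})
    s K (l := atTop) (fun j => ENNReal.ofReal (a ^ j * dK))
    (by
      have : Tendsto (fun j : ℕ => a ^ j * dK) atTop (𝓝 0) := by
        simpa using (tendsto_pow_atTop_nhds_zero_of_lt_one ha0.le ha1).mul_const dK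
      simpa using (ENNReal.tendsto_ofReal this))
    (fun j w => Phi φ w.1 '' K)
    (by
      filter_upwards with j
      intro w
      refine (ediam_cylinder_le hKb hc hsim w.1).trans (ENNReal.ofReal_le_ofReal ?_)
      have hcw : cw c w.1 ≤ a ^ j := by
        have := cw_le_of_mem_stopF hc ha w.2
        rwa [max_self] at this
      exact mul_le_mul_of_nonneg_right hcw hdK0)
    (by
      filter_upwards with j
      intro x hx
      obtain ⟨w, hw, hxw⟩ := stopF_covers hK j (ρ := a ^ j) hx
      exact Set.mem_iUnion.2 ⟨⟨w, hw⟩, hxw⟩)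
  refine hbound.trans ?_
  have hsum : ∀ j : ℕ, 0 < a ^ j →
      (∑ w : {w // w ∈ stopF c j (a ^ j)}, EMetric.diam (Phi φ w.1 '' K) ^ s)
        ≤ ENNReal.ofReal (dK ^ s) := by
    intro j haj
    calc ∑ w : {w // w ∈ stopF c j (a ^ j)}, EMetric.diam (Phi φ w.1 '' K) ^ s
        ≤ ∑ w : {w // w ∈ stopF c j (a ^ j)},
            ENNReal.ofReal ((cw c w.1 * dK) ^ s) := by
          refine Finset.sum_le_sum fun w _ => ?_
          calc EMetric.diam (Phi φ w.1 '' K) ^ s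
              ≤ (ENNReal.ofReal (cw c w.1 * dK)) ^ s :=
                ENNReal.rpow_le_rpow (ediam_cylinder_le hKb hc hsim w.1) hs0
            _ = ENNReal.ofReal ((cw c w.1 * dK) ^ s) := by
                rw [← ENNReal.ofReal_rpow_of_nonneg (mul_nonneg (cw_pos hc w.1).le hdK0) hs0]
      _ = ENNReal.ofReal (∑ w : {w // w ∈ stopF c j (a ^ j)}, (cw c w.1 * dK) ^ s) := by
          rw [ENNReal.ofReal_sum_of_nonneg]
          intro w _
          exact Real.rpow_nonneg (mul_nonneg (cw_pos hc w.1).le hdK0) s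
      _ = ENNReal.ofReal (dK ^ s) := by
          congr 1
          have : ∀ w : {w // w ∈ stopF c j (a ^ j)},
              (cw c w.1 * dK) ^ s = cw c w.1 ^ s * dK ^ s := fun w =>
            Real.mul_rpow (cw_pos hc w.1).le hdK0
          rw [Finset.sum_congr rfl fun w _ => this w, ← Finset.sum_mul,
            Finset.sum_coe_sort (stopF c j (a ^ j)) (fun w => cw c w ^ s),
            sum_stopF_mass hs hc j haj, one_mul]
  have hfin : ∀ᶠ j : ℕ in atTop,
      (∑ w : {w // w ∈ stopF c j (a ^ j)}, EMetric.diam (Phi φ w.1 '' K) ^ s)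
        ≤ ENNReal.ofReal (dK ^ s) := by
    filter_upwards with j
    exact hsum j (pow_pos ha0 j)
  exact Filter.liminf_le_of_frequently_le hfin.frequently

lemma pow_rpow_comm {x : ℝ} (hx : 0 ≤ x) (j : ℕ) (s : ℝ) :
    (x ^ j) ^ s = (x ^ s) ^ j := by
  rw [← Real.rpow_natCast x j, ← Real.rpow_mul hx, mul_comm, Real.rpow_mul hx,
    Real.rpow_natCast]

open scoped Classical in
lemma hausdorff_lower {s a b ε DU : ℝ} {U K : Set (Fin k → ℝ)} {u₀ : Fin k → ℝ}
    (hs : ∑ i : Fin n, c i ^ s = 1) (hs0 : 0 < s)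
    (hc : ∀ i, 0 < c i ∧ c i < 1)
    (hsim : ∀ i x y, dist (φ i x) (φ i y) = c i * dist x y)
    (ha : ∀ i, c i ≤ a) (ha0 : 0 < a) (ha1 : a < 1)
    (hb : ∀ i, b ≤ c i) (hb0 : 0 < b) (hb1 : b ≤ 1)
    (hUinv : ∀ i, φ i '' U ⊆ U) (hdisj : ∀ i j, i ≠ j → Disjoint (φ i '' U) (φ j '' U))
    (hε : 0 < ε) (hUc : closedBall u₀ ε ⊆ U)
    (hDU : ∀ x ∈ closure U, ∀ y ∈ closure U, dist x y ≤ DU)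
    (hKsub : ∀ i, φ i '' K ⊆ K) (hKclU : K ⊆ closure U)
    (hKne : K.Nonempty) (hKcp : IsCompact K) :
    ∃ c₁ : ℝ, 0 < c₁ ∧ ENNReal.ofReal c₁ ≤ μH[s] K := by
  have hu₀U : u₀ ∈ closure U := subset_closure (hUc (mem_closedBall_self hε.le))
  have hDU0 : 0 ≤ DU := by simpa using hDU u₀ hu₀U u₀ hu₀U
  set M₀ : ℝ := ((1 + DU) / (b * ε)) ^ k with hM₀def
  have hM₀ : 0 < M₀ := by positivity
  set Q : ℝ := (2 : ℝ) ^ s with hQdef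
  have hQ1 : (1:ℝ) ≤ Q := Real.one_le_rpow one_le_two hs0.le
  have hQ0 : 0 < Q := lt_of_lt_of_le one_pos hQ1
  set q : ℝ := (1/2 : ℝ) ^ s with hqdef
  have hq0 : 0 < q := Real.rpow_pos_of_pos (by norm_num) s
  have hq1 : q < 1 := Real.rpow_lt_one (by norm_num) (by norm_num) hs0
  set Cs : ℝ := (1 - q)⁻¹ with hCsdef
  have hCs0 : 0 < Cs := inv_pos.2 (by linarith)
  set z₀ : ℝ := 1 / (2 * Q * M₀ * Cs) with hz₀def
  have hz₀ : 0 < z₀ := by positivity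
  set η : ℝ := (min z₀ 1) ^ (1/s) with hηdef
  have hmin0 : 0 < min z₀ 1 := lt_min hz₀ one_pos
  have hη0 : 0 < η := Real.rpow_pos_of_pos hmin0 _
  have hη1 : η ≤ 1 := Real.rpow_le_one hmin0.le (min_le_right _ _) (by positivity)
  have hηs : η ^ s = min z₀ 1 := by
    rw [hηdef, ← Real.rpow_mul hmin0.le, one_div, inv_mul_cancel₀ hs0.ne', Real.rpow_one]
  set c₁ : ℝ := 1 / (2 * M₀ * Q) with hc₁def
  refine ⟨c₁, by positivity, ?_⟩
  rw [MeasureTheory.Measure.hausdorffMeasure_apply]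
  refine le_iSup₂_of_le (ENNReal.ofReal (1/4)) (by norm_num) ?_
  refine le_iInf fun t => le_iInf fun hcov => le_iInf fun hdiam => ?_
  -- setup of the cover data
  set ρ : ℕ → ℝ := fun j => (EMetric.diam (t j)).toReal with hρdef
  have hdfin : ∀ j, EMetric.diam (t j) ≠ ⊤ :=
    fun j => ((hdiam j).trans_lt ENNReal.ofReal_lt_top).ne
  have hρ0 : ∀ j, 0 ≤ ρ j := fun j => ENNReal.toReal_nonneg
  have hρ14 : ∀ j, ρ j ≤ 1/4 := fun j =>
    ENNReal.toReal_le_of_le_ofReal (by norm_num) (hdiam j)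
  set xc : ℕ → (Fin k → ℝ) := fun j =>
    if h : (t j).Nonempty then h.some else hKne.some with hxcdef
  set rr : ℕ → ℝ := fun j => ρ j + η * (1/2) ^ (j+1) with hrrdef
  have hrr0 : ∀ j, 0 < rr j := fun j => by
    have : (0:ℝ) < η * (1/2) ^ (j+1) := by positivity
    have := hρ0 j
    simp only [hrrdef]
    linarith
  have hrr1 : ∀ j, rr j < 1 := fun j => by
    have h1 : η * (1/2) ^ (j+1) ≤ 1 * (1/2) ^ 1 := by
      apply mul_le_mul hη1 ?_ (by positivity) zero_le_one
      exact pow_le_pow_of_le_one (by norm_num) (by norm_num) (by omega)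
    have := hρ14 j
    simp only [hrrdef]
    norm_num at h1 ⊢
    linarith
  have htsub : ∀ j, t j ⊆ ball (xc j) (rr j) := by
    intro j y hy
    have hne : (t j).Nonempty := ⟨y, hy⟩
    have hxc : xc j ∈ t j := by
      simp only [hxcdef, dif_pos hne]
      exact hne.some_mem
    have hrle : dist y (xc j) ≤ ρ j := by
      rw [dist_edist]
      apply ENNReal.toReal_mono (hdfin j)
      exact EMetric.edist_le_diam_of_mem hy hxc
    rw [mem_ball]
    have : (0:ℝ) < η * (1/2) ^ (j+1) := by positivity
    simp only [hrrdef]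
    linarith
  -- compact subcover
  have hcov2 : K ⊆ ⋃ j, ball (xc j) (rr j) :=
    hcov.trans (Set.iUnion_mono htsub)
  obtain ⟨F, hF⟩ := hKcp.elim_finite_subcover _ (fun j => isOpen_ball) hcov2
  have hFne : F.Nonempty := by
    obtain ⟨x0, hx0⟩ := hKne
    have := hF hx0
    rw [Set.mem_iUnion₂] at this
    obtain ⟨j0, hj0, -⟩ := this
    exact ⟨j0, hj0⟩
  set δ₀ : ℝ := F.inf' hFne rr with hδ₀def
  have hδ₀pos : 0 < δ₀ := by
    rw [hδ₀def, Finset.lt_inf'_iff]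
    exact fun j _ => hrr0 j
  have hδ₀le : ∀ j ∈ F, δ₀ ≤ rr j := fun j hj => Finset.inf'_le _ hj
  obtain ⟨m, hm⟩ := exists_pow_lt_of_lt_one hδ₀pos ha1
  set S := stopF c m δ₀ with hSdef
  -- every stopping cylinder meets one of the balls
  have hPex : ∀ w ∈ S, ∃ j ∈ F, (Phi φ w '' K ∩ closedBall (xc j) (rr j)).Nonempty := by
    intro w _
    obtain ⟨y0, hy0⟩ := hKne
    have hz : Phi φ w y0 ∈ Phi φ w '' K := ⟨y0, hy0, rfl⟩
    have hzK : Phi φ w y0 ∈ K := Phi_image_subset hKsub w hz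
    have := hF hzK
    rw [Set.mem_iUnion₂] at this
    obtain ⟨j, hj, hball⟩ := this
    exact ⟨j, hj, ⟨Phi φ w y0, hz, ball_subset_closedBall hball⟩⟩
  -- split the mass over the balls
  have hsplit : (1:ℝ) ≤ ∑ j ∈ F, ∑ w ∈ S.filter
      (fun w => (Phi φ w '' K ∩ closedBall (xc j) (rr j)).Nonempty), cw c w ^ s := by
    have h1 : (1:ℝ) = ∑ w ∈ S, cw c w ^ s := (sum_stopF_mass hs hc m hδ₀pos).symm
    rw [h1]
    calc ∑ w ∈ S, cw c w ^ s
        ≤ ∑ w ∈ S, ∑ j ∈ F,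
            (if (Phi φ w '' K ∩ closedBall (xc j) (rr j)).Nonempty
              then cw c w ^ s else 0) := by
          refine Finset.sum_le_sum fun w hw => ?_
          obtain ⟨j₀, hj₀, hP₀⟩ := hPex w hw
          have := Finset.single_le_sum
            (f := fun j => if (Phi φ w '' K ∩ closedBall (xc j) (rr j)).Nonempty
              then cw c w ^ s else 0)
            (fun j _ => by
              split
              · exact Real.rpow_nonneg (cw_pos hc w).le s
              · exact le_rfl) hj₀
          rwa [if_pos hP₀] at this
      _ = ∑ j ∈ F, ∑ w ∈ S,
            (if (Phi φ w '' K ∩ closedBall (xc j) (rr j)).Nonempty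
              then cw c w ^ s else 0) := Finset.sum_comm
      _ = ∑ j ∈ F, ∑ w ∈ S.filter
            (fun w => (Phi φ w '' K ∩ closedBall (xc j) (rr j)).Nonempty), cw c w ^ s := by
          exact Finset.sum_congr rfl fun j _ => (Finset.sum_filter _ _).symm
  have hball : ∀ j ∈ F, ∑ w ∈ S.filter
      (fun w => (Phi φ w '' K ∩ closedBall (xc j) (rr j)).Nonempty), cw c w ^ s
        ≤ M₀ * rr j ^ s := by
    intro j hj
    exact mass_ball_bound hs hs0.le hc hsim ha hb hb0 hb1 hUinv hdisj hε hUc hDU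
      hKsub hKclU m δ₀ (rr j) hδ₀pos (hδ₀le j hj) (hrr1 j) hm.le (xc j)
  have step1 : (1:ℝ) ≤ M₀ * ∑ j ∈ F, rr j ^ s := by
    rw [Finset.mul_sum]
    exact hsplit.trans (Finset.sum_le_sum hball)
  -- split (x+y)^s
  have hrs : ∀ j, rr j ^ s ≤ Q * (ρ j ^ s + (η * (1/2) ^ (j+1)) ^ s) := by
    intro j
    set x := ρ j
    set y := η * (1/2) ^ (j+1) with hydef
    have hx0 : 0 ≤ x := hρ0 j
    have hy0 : (0:ℝ) < y := by positivity
    have h1 : rr j ≤ 2 * max x y := by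
      simp only [hrrdef]
      rcases max_cases x y with ⟨hm1, hm2⟩ | ⟨hm1, hm2⟩ <;> (rw [hm1]; linarith)
    have h2 : rr j ^ s ≤ (2 * max x y) ^ s :=
      Real.rpow_le_rpow (hrr0 j).le h1 hs0.le
    have h3 : (2 * max x y) ^ s = Q * (max x y) ^ s := by
      rw [Real.mul_rpow zero_le_two (le_max_of_le_right hy0.le)]
    have h4 : (max x y) ^ s ≤ x ^ s + y ^ s := by
      rcases max_cases x y with ⟨hm1, _⟩ | ⟨hm1, _⟩ <;> rw [hm1]
      · have : 0 ≤ y ^ s := Real.rpow_nonneg hy0.le s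
        linarith
      · have : 0 ≤ x ^ s := Real.rpow_nonneg hx0 s
        linarith
    calc rr j ^ s ≤ (2 * max x y) ^ s := h2
      _ = Q * (max x y) ^ s := h3
      _ ≤ Q * (x ^ s + y ^ s) := mul_le_mul_of_nonneg_left h4 hQ0.le
  -- geometric bound on the η part
  have hgeom : ∑ j ∈ F, (η * (1/2) ^ (j+1)) ^ s ≤ η ^ s * Cs := by
    have hterm : ∀ j : ℕ, (η * (1/2) ^ (j+1)) ^ s = η ^ s * q ^ (j+1) := by
      intro j
      rw [Real.mul_rpow hη0.le (by positivity), pow_rpow_comm (by norm_num : (0:ℝ) ≤ 1/2)]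
    rw [Finset.sum_congr rfl fun j _ => hterm j, ← Finset.mul_sum]
    apply mul_le_mul_of_nonneg_left ?_ (Real.rpow_nonneg hη0.le s)
    obtain ⟨N, hN⟩ := F.exists_nat_subset_range
    calc ∑ j ∈ F, q ^ (j+1) ≤ ∑ j ∈ Finset.range N, q ^ (j+1) := by
          apply Finset.sum_le_sum_of_subset_of_nonneg hN
          intro j _ _
          positivity
      _ ≤ ∑ j ∈ Finset.range N, q ^ j := by
          apply Finset.sum_le_sum
          intro j _
          exact pow_le_pow_of_le_one hq0.le hq1.le (by omega)
      _ ≤ Cs := by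
          rw [hCsdef]
          apply Summable.sum_le_tsum (Finset.range N) (fun j _ => by positivity)
            (summable_geometric_of_lt_one hq0.le hq1) |>.trans
          rw [tsum_geometric_of_lt_one hq0.le hq1]
  -- conclude the real inequality
  have hfinal : c₁ ≤ ∑ j ∈ F, ρ j ^ s := by
    have h5 : ∑ j ∈ F, rr j ^ s
        ≤ Q * (∑ j ∈ F, ρ j ^ s) + Q * (η ^ s * Cs) := by
      calc ∑ j ∈ F, rr j ^ s
          ≤ ∑ j ∈ F, Q * (ρ j ^ s + (η * (1/2) ^ (j+1)) ^ s) :=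
            Finset.sum_le_sum fun j _ => hrs j
        _ = Q * (∑ j ∈ F, ρ j ^ s) + Q * ∑ j ∈ F, (η * (1/2) ^ (j+1)) ^ s := by
            rw [← Finset.mul_sum, ← mul_add, Finset.sum_add_distrib]
        _ ≤ Q * (∑ j ∈ F, ρ j ^ s) + Q * (η ^ s * Cs) := by
            have := mul_le_mul_of_nonneg_left hgeom hQ0.le
            linarith
    have h6 : η ^ s * Cs ≤ z₀ * Cs :=
      mul_le_mul_of_nonneg_right (hηs ▸ min_le_left _ _) hCs0.le
    have h7 : M₀ * (Q * (z₀ * Cs)) = 1/2 := by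
      rw [hz₀def]
      field_simp
    have h8 : (1:ℝ) ≤ M₀ * (Q * (∑ j ∈ F, ρ j ^ s)) + 1/2 := by
      calc (1:ℝ) ≤ M₀ * ∑ j ∈ F, rr j ^ s := step1
        _ ≤ M₀ * (Q * (∑ j ∈ F, ρ j ^ s) + Q * (η ^ s * Cs)) :=
            mul_le_mul_of_nonneg_left h5 hM₀.le
        _ ≤ M₀ * (Q * (∑ j ∈ F, ρ j ^ s) + Q * (z₀ * Cs)) := by
            have h9 := mul_le_mul_of_nonneg_left h6 hQ0.le
            have := mul_le_mul_of_nonneg_left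
              (add_le_add_left h9 (Q * (∑ j ∈ F, ρ j ^ s))) hM₀.le
            linarith
        _ = M₀ * (Q * (∑ j ∈ F, ρ j ^ s)) + M₀ * (Q * (z₀ * Cs)) := by ring
        _ = M₀ * (Q * (∑ j ∈ F, ρ j ^ s)) + 1/2 := by rw [h7]
    have h10 : 1/2 ≤ M₀ * Q * (∑ j ∈ F, ρ j ^ s) := by linarith [h8]
    rw [hc₁def]
    rw [div_le_iff₀ (by positivity : (0:ℝ) < 2 * M₀ * Q)] at *
    nlinarith [h10]
  -- pass to the extended reals
  calc ENNReal.ofReal c₁ ≤ ENNReal.ofReal (∑ j ∈ F, ρ j ^ s) :=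
        ENNReal.ofReal_le_ofReal hfinal
    _ = ∑ j ∈ F, ENNReal.ofReal (ρ j ^ s) :=
        ENNReal.ofReal_sum_of_nonneg fun j _ => Real.rpow_nonneg (hρ0 j) s
    _ ≤ ∑ j ∈ F, ⨆ _ : (t j).Nonempty, EMetric.diam (t j) ^ s := by
        refine Finset.sum_le_sum fun j _ => ?_
        by_cases hne : (t j).Nonempty
        · rw [iSup_pos hne]
          have : EMetric.diam (t j) = ENNReal.ofReal (ρ j) :=
            (ENNReal.ofReal_toReal (hdfin j)).symm
          rw [this, ← ENNReal.ofReal_rpow_of_nonneg (hρ0 j) hs0.le]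
        · have : t j = ∅ := Set.not_nonempty_iff_eq_empty.1 hne
          have hd0 : ρ j = 0 := by
            simp [hρdef, this]
            exact (ENNReal.toReal_eq_zero_iff _).2 (Or.inl Metric.ediam_empty)
          rw [hd0, Real.zero_rpow hs0.ne', ENNReal.ofReal_zero]
          exact zero_le
    _ ≤ ∑' j : ℕ, ⨆ _ : (t j).Nonempty, EMetric.diam (t j) ^ s :=
        ENNReal.sum_le_tsum F

lemma exists_sim_dim {a : ℝ} (hn : 2 ≤ n) (hc : ∀ i, 0 < c i ∧ c i < 1)
    (ha : ∀ i, c i ≤ a) (ha0 : 0 < a) (ha1 : a < 1) :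
    ∃ s : ℝ, 0 < s ∧ ∑ i : Fin n, c i ^ s = 1 := by
  set F : ℝ → ℝ := fun t => ∑ i : Fin n, c i ^ t with hF
  have hFc : Continuous F := by
    apply continuous_finset_sum
    intro i _
    have heq : (fun t : ℝ => c i ^ t) = fun t => Real.exp (Real.log (c i) * t) := by
      funext t
      rw [Real.rpow_def_of_pos (hc i).1, mul_comm]
    show Continuous fun t : ℝ => c i ^ t
    rw [heq]
    exact Real.continuous_exp.comp (continuous_const.mul continuous_id)
  obtain ⟨m, hm⟩ := exists_pow_lt_of_lt_one (show (0:ℝ) < 1/n by positivity) ha1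
  have hFm : F (m : ℝ) < 1 := by
    have h1 : ∀ i : Fin n, c i ^ (m:ℝ) ≤ a ^ m := by
      intro i
      rw [Real.rpow_natCast]
      exact pow_le_pow_left₀ (hc i).1.le (ha i) m
    calc F (m:ℝ) ≤ ∑ _i : Fin n, a ^ m := Finset.sum_le_sum fun i _ => h1 i
      _ = n * a ^ m := by rw [Finset.sum_const, Finset.card_univ, Fintype.card_fin,
            nsmul_eq_mul]
      _ < n * (1/n) := by
          apply mul_lt_mul_of_pos_left hm
          positivity
      _ = 1 := by field_simp
  have hF0 : (1:ℝ) ≤ F 0 := by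
    have : F 0 = n := by
      simp [hF, Real.rpow_zero, Finset.card_univ]
    rw [this]
    exact_mod_cast by omega
  have hmem : (1:ℝ) ∈ Set.Icc (F (m:ℝ)) (F 0) := ⟨hFm.le, hF0⟩
  have := intermediate_value_Icc' (by positivity : (0:ℝ) ≤ (m:ℝ)) hFc.continuousOn
  obtain ⟨s, hsmem, hsval⟩ := this hmem
  refine ⟨s, ?_, hsval⟩
  rcases eq_or_lt_of_le hsmem.1 with h0 | h0
  · exfalso
    rw [← h0] at hsval
    have : F 0 = n := by simp [hF, Real.rpow_zero, Finset.card_univ]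
    rw [this] at hsval
    have : (n:ℝ) ≥ 2 := by exact_mod_cast hn
    linarith
  · exact h0

lemma dimH_eq_of_measure {s : ℝ} (hs0 : 0 < s) {K : Set (Fin k → ℝ)}
    (h1 : μH[s] K ≠ 0) (h2 : μH[s] K ≠ ⊤) : dimH K = ENNReal.ofReal s := by
  have hco : ((s.toNNReal : ℝ≥0) : ℝ) = s := Real.coe_toNNReal s hs0.le
  have hd := dimH_of_hausdorffMeasure_ne_zero_ne_top (d := s.toNNReal)
    (by rwa [hco]) (by rwa [hco])
  rw [hd]
  rfl

end

end Stmt14Aux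

open Stmt14Aux

/-- A self-similar set satisfying the open set condition satisfies the local scaling
property with respect to `κ = dim_H K / k`. -/
theorem stmt14 (k n : ℕ) (hn : 2 ≤ n) (φ : Fin n → (Fin k → ℝ) → (Fin k → ℝ))
    (c : Fin n → ℝ) (hc : ∀ i, 0 < c i ∧ c i < 1)
    (hsim : ∀ i x y, dist (φ i x) (φ i y) = c i * dist x y)
    (hOSC : ∃ U : Set (Fin k → ℝ), U.Nonempty ∧ IsOpen U ∧ Bornology.IsBounded U ∧
      (∀ i, φ i '' U ⊆ U) ∧ ∀ i j, i ≠ j → Disjoint (φ i '' U) (φ j '' U))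
    (K : Set (Fin k → ℝ)) (hKne : K.Nonempty) (hKcp : IsCompact K)
    (hK : K = ⋃ i, φ i '' K)
    (d : ℝ) (hd0 : 0 ≤ d) (hd : dimH K = ENNReal.ofReal d) :
    ∃ c₃ c₄ r₀ : ℝ, 0 < c₃ ∧ 0 < c₄ ∧ 0 < r₀ ∧
      ∀ δ r : ℝ, 0 < δ → δ < r → r < r₀ → ∀ x ∈ K,
        ENNReal.ofReal (c₃ * δ ^ ((k : ℝ) - d) * r ^ d) ≤
            MeasureTheory.volume (Metric.closedBall x r ∩ {y | Metric.infDist y K < δ}) ∧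
          MeasureTheory.volume (Metric.closedBall x r ∩ {y | Metric.infDist y K < δ}) ≤
            ENNReal.ofReal (c₄ * δ ^ ((k : ℝ) - d) * r ^ d) := by
  classical
  obtain ⟨U, hUne, hUopen, hUbd, hUinv, hdisj⟩ := hOSC
  haveI : Nonempty (Fin n) := ⟨⟨0, by omega⟩⟩
  set a := Finset.univ.sup' Finset.univ_nonempty c with hadef
  have ha : ∀ i, c i ≤ a := fun i => Finset.le_sup' c (Finset.mem_univ i)
  have ha0 : 0 < a := lt_of_lt_of_le (hc (Classical.arbitrary _)).1 (ha _)
  have ha1 : a < 1 := by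
    rw [hadef, Finset.sup'_lt_iff]
    exact fun i _ => (hc i).2
  set b := Finset.univ.inf' Finset.univ_nonempty c with hbdef
  have hb : ∀ i, b ≤ c i := fun i => Finset.inf'_le c (Finset.mem_univ i)
  have hb0 : 0 < b := by
    rw [hbdef, Finset.lt_inf'_iff]
    exact fun i _ => (hc i).1
  have hb1 : b ≤ 1 := (hb (Classical.arbitrary _)).trans (hc _).2.le
  obtain ⟨s, hs0, hs⟩ := exists_sim_dim hn hc ha ha0 ha1
  have hKb := hKcp.isBounded
  have hKsub : ∀ i, φ i '' K ⊆ K := fun i => by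
    conv_rhs => rw [hK]
    exact Set.subset_iUnion (fun j => φ j '' K) i
  have hKclU : K ⊆ closure U :=
    K_subset_closureU hc ha ha0.le ha1 hsim hUne hUinv hKb hK
  obtain ⟨u₀, hu₀⟩ := hUne
  obtain ⟨ε₂, hε₂, hball⟩ := Metric.isOpen_iff.1 hUopen u₀ hu₀
  set ε := ε₂ / 2 with hεdef
  have hε : 0 < ε := by positivity
  have hUc : closedBall u₀ ε ⊆ U :=
    (closedBall_subset_ball (by rw [hεdef]; linarith)).trans hball
  set DU := Metric.diam (closure U) with hDUdef
  have hUbd' : Bornology.IsBounded (closure U) := hUbd.closure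
  have hDU : ∀ x ∈ closure U, ∀ y ∈ closure U, dist x y ≤ DU :=
    fun x hx y hy => Metric.dist_le_diam_of_mem hUbd' hx hy
  have hDU0 : 0 ≤ DU := Metric.diam_nonneg
  set DK := Metric.diam K with hDKdef
  have hDK : ∀ x ∈ K, ∀ y ∈ K, dist x y ≤ DK :=
    fun x hx y hy => Metric.dist_le_diam_of_mem hKb hx hy
  have hDK0 : 0 ≤ DK := Metric.diam_nonneg
  -- identification of the dimension
  have hdim : dimH K = ENNReal.ofReal s := by
    apply dimH_eq_of_measure hs0
    · obtain ⟨c₁, hc₁, hlow⟩ := hausdorff_lower hs hs0 hc hsim ha ha0 ha1 hb hb0 hb1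
        hUinv hdisj hε hUc hDU hKsub hKclU hKne hKcp
      intro h0
      rw [h0] at hlow
      have h2 : ENNReal.ofReal c₁ = 0 := le_antisymm hlow zero_le
      rw [ENNReal.ofReal_eq_zero] at h2
      linarith
    · intro htop
      have hup := hausdorff_upper hs hs0.le hc hsim ha ha0 ha1 hKb hK
      rw [htop] at hup
      exact ENNReal.ofReal_ne_top (top_le_iff.1 hup)
  have hds : d = s := by
    have h3 : ENNReal.ofReal d = ENNReal.ofReal s := hd.symm.trans hdim
    exact (ENNReal.ofReal_eq_ofReal_iff hd0 hs0.le).1 h3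
  subst hds
  -- the constants
  set γ : ℝ := 2 * (DU + 1) with hγdef
  have hγ0 : 0 < γ := by positivity
  have hγ2 : 2 ≤ γ := by rw [hγdef]; linarith
  set M₀ : ℝ := ((1 + DU) / (b * ε)) ^ k with hM₀def
  have hM₀ : 0 < M₀ := by positivity
  set c₃ : ℝ := b ^ d * (b * (2 * ε) / γ) ^ k with hc₃def
  set c₄ : ℝ := M₀ * 2 ^ d * (1 / b) ^ d * (2 * (1 + DK)) ^ k with hc₄def
  have hc₃0 : 0 < c₃ := by
    rw [hc₃def]
    have h1 : (0:ℝ) < b ^ d := Real.rpow_pos_of_pos hb0 d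
    positivity
  have hc₄0 : 0 < c₄ := by
    rw [hc₄def]
    have h1 : (0:ℝ) < (2:ℝ) ^ d := Real.rpow_pos_of_pos two_pos d
    have h2 : (0:ℝ) < (1/b : ℝ) ^ d := Real.rpow_pos_of_pos (by positivity) d
    positivity
  refine ⟨c₃, c₄, 1/2, hc₃0, hc₄0, by norm_num, ?_⟩
  intro δ r hδ hδr hr x hx
  have hr0 : 0 < r := hδ.trans hδr
  constructor
  · -- LOWER BOUND
    set δ' := δ / γ with hδ'def
    set r' := r / γ with hr'def
    have hδ'0 : 0 < δ' := by positivity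
    have hr'0 : 0 < r' := by positivity
    have hδ'r' : δ' ≤ r' := by
      rw [hδ'def, hr'def]
      gcongr
    have hr'1 : r' < 1 := by
      have h1 : r' ≤ r / 2 := div_le_div_of_nonneg_left hr0.le two_pos hγ2
      linarith
    have hδ'1 : δ' < 1 := lt_of_le_of_lt hδ'r' hr'1
    obtain ⟨m, hm⟩ := exists_pow_lt_of_lt_one hδ'0 ha1
    obtain ⟨v, hv, hxv⟩ := stopF_covers hK m (ρ := r') hx
    obtain ⟨y₀, hy₀K, hy₀x⟩ := hxv
    set W := (stopF c m δ').filter (fun w => v <+: w) with hWdef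
    have hpre : ∀ u, u <+: v → u.length < v.length → r' < cw c u := cw_prefix_gt hc hv
    have hmass : ∑ w ∈ W, cw c w ^ d = cw c v ^ d :=
      sum_stopF_desc hs hc v m δ' hδ'0 (length_le_of_mem_stopF hv)
        (fun u hu hul => lt_of_le_of_lt hδ'r' (hpre u hu hul))
    have hcv_le : cw c v ≤ r' := by
      have := cw_le_of_mem_stopF hc ha hv
      rwa [max_eq_left (le_trans hm.le hδ'r')] at this
    have hcv_ge : b * r' ≤ cw c v := by
      have := le_cw_of_mem_stopF hc hb hb0 hb1 hr'0 hv
      rwa [min_eq_left hr'1.le] at this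
    have hcw_le : ∀ w ∈ W, cw c w ≤ δ' := fun w hw => by
      have := cw_le_of_mem_stopF hc ha (Finset.mem_of_mem_filter w hw)
      rwa [max_eq_left hm.le] at this
    have hcw_geδ : ∀ w ∈ W, b * δ' ≤ cw c w := fun w hw => by
      have := le_cw_of_mem_stopF hc hb hb0 hb1 hδ'0 (Finset.mem_of_mem_filter w hw)
      rwa [min_eq_left hδ'1.le] at this
    have hcard : (b * r') ^ d ≤ (W.card : ℝ) * δ' ^ d := by
      calc (b*r')^d ≤ cw c v ^ d := Real.rpow_le_rpow (by positivity) hcv_ge hs0.le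
        _ = ∑ w ∈ W, cw c w ^ d := hmass.symm
        _ ≤ ∑ _w ∈ W, δ' ^ d := Finset.sum_le_sum fun w hw =>
            Real.rpow_le_rpow (cw_pos hc w).le (hcw_le w hw) hs0.le
        _ = (W.card:ℝ) * δ'^d := by rw [Finset.sum_const, nsmul_eq_mul]
    have hTsub : ∀ w ∈ W, Phi φ w '' closedBall u₀ ε
        ⊆ closedBall x r ∩ {y | Metric.infDist y K < δ} := by
      intro w hw
      obtain ⟨tt, htt⟩ := (Finset.mem_filter.1 hw).2
      rintro _ ⟨u, hu, rfl⟩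
      have huCl : u ∈ closure U := subset_closure (hUc hu)
      constructor
      · rw [mem_closedBall, ← hy₀x, ← htt, Phi_append]
        simp only [Function.comp_apply]
        have h2 : Phi φ tt u ∈ closure U :=
          Phi_image_subset (closure_invariant hc hsim hUinv) tt ⟨u, huCl, rfl⟩
        rw [dist_Phi hsim]
        calc cw c v * dist (Phi φ tt u) y₀
            ≤ r' * DU :=
              mul_le_mul hcv_le (hDU _ h2 _ (hKclU hy₀K)) dist_nonneg hr'0.le
          _ ≤ r := by
              have hDUγ : DU ≤ γ := by rw [hγdef]; linarith
              calc r' * DU ≤ r' * γ := mul_le_mul_of_nonneg_left hDUγ hr'0.le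
                _ = r := by rw [hr'def]; field_simp
      · rw [Set.mem_setOf_eq]
        have h3 : Phi φ w hKne.some ∈ K :=
          Phi_image_subset hKsub w ⟨hKne.some, hKne.some_mem, rfl⟩
        have h4 : Metric.infDist (Phi φ w u) K ≤ dist (Phi φ w u) (Phi φ w hKne.some) :=
          Metric.infDist_le_dist_of_mem h3
        rw [dist_Phi hsim] at h4
        have h5 : dist u hKne.some ≤ DU := hDU u huCl _ (hKclU hKne.some_mem)
        calc Metric.infDist (Phi φ w u) K ≤ cw c w * dist u hKne.some := h4
          _ ≤ δ' * DU := mul_le_mul (hcw_le w hw) h5 dist_nonneg hδ'0.le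
          _ < δ := by
              have hDUγ : DU < γ := by rw [hγdef]; linarith
              calc δ' * DU < δ' * γ := mul_lt_mul_of_pos_left hDUγ hδ'0
                _ = δ := by rw [hδ'def]; field_simp
    have hmeas : ∀ w ∈ W, MeasurableSet (Phi φ w '' closedBall u₀ ε) := fun w _ =>
      ((isCompact_closedBall u₀ ε).image (Phi_continuous hc hsim w)).measurableSet
    have hdisjW : (W : Set (List (Fin n))).PairwiseDisjoint
        (fun w => Phi φ w '' closedBall u₀ ε) := by
      intro w1 hw1 w2 hw2 hne
      have h1 : ¬ w1 <+: w2 := fun h => hne (stopF_prefix_eq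
        (Finset.mem_of_mem_filter w1 hw1) (Finset.mem_of_mem_filter w2 hw2) h)
      have h2 : ¬ w2 <+: w1 := fun h => hne (stopF_prefix_eq
        (Finset.mem_of_mem_filter w2 hw2) (Finset.mem_of_mem_filter w1 hw1) h).symm
      exact Set.disjoint_of_subset (Set.image_mono hUc) (Set.image_mono hUc)
        (Phi_disjoint hc hsim hUinv hdisj w1 w2 h1 h2)
    have hvol1 : ∀ w ∈ W, ENNReal.ofReal ((b*δ')^k * (2*ε)^k)
        ≤ volume (Phi φ w '' closedBall u₀ ε) := by
      intro w hw
      have h1 := vol_image_ge (cw_pos hc w) (dist_Phi hsim w) (closedBall u₀ ε)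
      have h2 : volume (closedBall u₀ ε) = ENNReal.ofReal ((2 * ε) ^ k) := by
        rw [Real.volume_pi_closedBall u₀ hε.le, Fintype.card_fin]
      rw [h2] at h1
      refine le_trans ?_ h1
      rw [← ENNReal.ofReal_mul (pow_nonneg (cw_pos hc w).le k)]
      apply ENNReal.ofReal_le_ofReal
      apply mul_le_mul_of_nonneg_right _ (by positivity)
      exact pow_le_pow_left₀ (by positivity) (hcw_geδ w hw) k
    have hvv : ENNReal.ofReal ((W.card:ℝ) * ((b*δ')^k*(2*ε)^k))
        ≤ volume (closedBall x r ∩ {y | Metric.infDist y K < δ}) := by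
      calc ENNReal.ofReal ((W.card:ℝ) * ((b*δ')^k*(2*ε)^k))
          = (W.card : ℝ≥0∞) * ENNReal.ofReal ((b*δ')^k*(2*ε)^k) := by
            rw [ENNReal.ofReal_mul (Nat.cast_nonneg _), ENNReal.ofReal_natCast]
        _ = W.card • ENNReal.ofReal ((b*δ')^k*(2*ε)^k) := by rw [nsmul_eq_mul]
        _ ≤ ∑ w ∈ W, volume (Phi φ w '' closedBall u₀ ε) :=
            Finset.card_nsmul_le_sum W _ _ hvol1
        _ = volume (⋃ w ∈ W, Phi φ w '' closedBall u₀ ε) :=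
            (measure_biUnion_finset hdisjW hmeas).symm
        _ ≤ volume (closedBall x r ∩ {y | Metric.infDist y K < δ}) :=
            measure_mono (Set.iUnion₂_subset hTsub)
    refine le_trans ?_ hvv
    apply ENNReal.ofReal_le_ofReal
    have hδ'd : (0:ℝ) < δ'^d := Real.rpow_pos_of_pos hδ'0 d
    have hkey : (b*r')^d / δ'^d * ((b*δ')^k*(2*ε)^k) = c₃ * δ^((k:ℝ)-d) * r^d := by
      rw [hc₃def]
      have e1 : δ ^ ((k:ℝ)-d) = δ^(k:ℕ)/δ^d := by
        rw [Real.rpow_sub hδ, Real.rpow_natCast]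
      have e2 : (b*r' : ℝ)^d = b^d * (r^d / γ^d) := by
        rw [Real.mul_rpow hb0.le hr'0.le, hr'def, Real.div_rpow hr0.le hγ0.le]
      have e3 : δ'^d = δ^d/γ^d := by
        rw [hδ'def, Real.div_rpow hδ.le hγ0.le]
      rw [e1, e2, e3, hδ'def]
      have hbd : (0:ℝ) < b ^ d := Real.rpow_pos_of_pos hb0 d
      have hδd : (0:ℝ) < δ ^ d := Real.rpow_pos_of_pos hδ d
      have hγd : (0:ℝ) < γ ^ d := Real.rpow_pos_of_pos hγ0 d
      rw [show (b*(δ/γ):ℝ) = (b*δ)/γ by ring, div_pow]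
      field_simp
      have hγk : (2+DU*2)^k * (2+DU*2)⁻¹^k = 1 := by
        rw [← mul_pow, mul_inv_cancel₀ (ne_of_gt (by linarith)), one_pow]
      linear_combination (-(b^k*δ^k*ε₂^k)) * hγk
    calc c₃ * δ^((k:ℝ)-d) * r^d = (b*r')^d/δ'^d * ((b*δ')^k*(2*ε)^k) := hkey.symm
      _ ≤ ((W.card:ℝ)*δ'^d)/δ'^d * ((b*δ')^k*(2*ε)^k) := by
          gcongr
      _ = (W.card:ℝ) * ((b*δ')^k*(2*ε)^k) := by
          rw [mul_div_assoc, div_self hδ'd.ne', mul_one]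
  · -- UPPER BOUND
    set ρ := r + δ with hρdef
    have hρ1 : ρ < 1 := by rw [hρdef]; linarith
    have hδρ : δ ≤ ρ := by rw [hρdef]; linarith
    obtain ⟨m, hm⟩ := exists_pow_lt_of_lt_one hδ ha1
    set V := (stopF c m δ).filter
      (fun w => (Phi φ w '' K ∩ closedBall x ρ).Nonempty) with hVdef
    have hmass : ∑ w ∈ V, cw c w ^ d ≤ M₀ * ρ ^ d := by
      have h := mass_ball_bound hs hs0.le hc hsim ha hb hb0 hb1 hUinv hdisj hε hUc hDU
        hKsub hKclU m δ ρ hδ hδρ hρ1 hm.le x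
      exact h
    have hcwle : ∀ w ∈ stopF c m δ, cw c w ≤ δ := fun w hw => by
      have := cw_le_of_mem_stopF hc ha hw
      rwa [max_eq_left hm.le] at this
    have hcw_ge : ∀ w ∈ V, b * δ ≤ cw c w := fun w hw => by
      have := le_cw_of_mem_stopF hc hb hb0 hb1 hδ (Finset.mem_of_mem_filter w hw)
      rwa [min_eq_left (by linarith : δ ≤ 1)] at this
    have hcard : (V.card : ℝ) * (b * δ) ^ d ≤ M₀ * (2 * r) ^ d := by
      have hρ0 : (0:ℝ) ≤ ρ := by rw [hρdef]; linarith
      calc (V.card : ℝ) * (b*δ)^d = ∑ _w ∈ V, (b*δ)^d := by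
            rw [Finset.sum_const, nsmul_eq_mul]
        _ ≤ ∑ w ∈ V, cw c w ^ d := Finset.sum_le_sum fun w hw =>
            Real.rpow_le_rpow (by positivity) (hcw_ge w hw) hs0.le
        _ ≤ M₀ * ρ ^ d := hmass
        _ ≤ M₀ * (2*r)^d := by
            apply mul_le_mul_of_nonneg_left _ hM₀.le
            exact Real.rpow_le_rpow hρ0 (by linarith) hs0.le
    set p : List (Fin n) → (Fin k → ℝ) := fun w => Phi φ w hKne.some with hpdef
    have hsub : closedBall x r ∩ {y | Metric.infDist y K < δ}
        ⊆ ⋃ w ∈ V, closedBall (p w) (δ * (1 + DK)) := by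
      rintro y ⟨hyball, hyinf⟩
      rw [Set.mem_setOf_eq] at hyinf
      obtain ⟨z, hzK, hzy⟩ := (Metric.infDist_lt_iff hKne).1 hyinf
      obtain ⟨w, hw, hzw⟩ := stopF_covers hK m (ρ := δ) hzK
      have hwV : w ∈ V := by
        rw [hVdef, Finset.mem_filter]
        refine ⟨hw, ⟨z, hzw, ?_⟩⟩
        rw [mem_closedBall]
        have h1 : dist y x ≤ r := mem_closedBall.1 hyball
        calc dist z x ≤ dist z y + dist y x := dist_triangle _ _ _
          _ ≤ ρ := by
              rw [dist_comm z y, hρdef]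
              linarith
      obtain ⟨z', hz', hz'w⟩ := hzw
      have hdzp : dist z (p w) ≤ δ * DK := by
        rw [← hz'w, hpdef]
        rw [dist_Phi hsim]
        exact mul_le_mul (hcwle w hw) (hDK z' hz' hKne.some hKne.some_mem)
          dist_nonneg hδ.le
      refine Set.mem_biUnion hwV ?_
      rw [mem_closedBall]
      calc dist y (p w) ≤ dist y z + dist z (p w) := dist_triangle _ _ _
        _ ≤ δ + δ * DK := add_le_add hzy.le hdzp
        _ = δ * (1+DK) := by ring
    have hvol : volume (closedBall x r ∩ {y | Metric.infDist y K < δ})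
        ≤ (V.card : ℝ≥0∞) * ENNReal.ofReal ((2 * (δ * (1 + DK))) ^ k) := by
      calc volume (closedBall x r ∩ {y | Metric.infDist y K < δ})
          ≤ volume (⋃ w ∈ V, closedBall (p w) (δ*(1+DK))) := measure_mono hsub
        _ ≤ ∑ w ∈ V, volume (closedBall (p w) (δ*(1+DK))) := measure_biUnion_finset_le _ _
        _ = ∑ _w ∈ V, ENNReal.ofReal ((2*(δ*(1+DK)))^k) := by
            refine Finset.sum_congr rfl fun w _ => ?_
            rw [Real.volume_pi_closedBall _ (by positivity), Fintype.card_fin]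
        _ = (V.card : ℝ≥0∞) * ENNReal.ofReal ((2*(δ*(1+DK)))^k) := by
            rw [Finset.sum_const, nsmul_eq_mul]
    refine hvol.trans ?_
    rw [show ((V.card : ℝ≥0∞)) = ENNReal.ofReal (V.card : ℝ) by
        rw [ENNReal.ofReal_natCast],
      ← ENNReal.ofReal_mul (Nat.cast_nonneg _)]
    apply ENNReal.ofReal_le_ofReal
    have hbδd : (0:ℝ) < (b*δ) ^ d := Real.rpow_pos_of_pos (by positivity) d
    have hkey : M₀ * (2*r)^d / (b*δ)^d * (2*(δ*(1+DK)))^k = c₄ * δ^((k:ℝ)-d) * r^d := by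
      rw [hc₄def]
      have e1 : δ ^ ((k:ℝ) - d) = δ ^ (k:ℕ) / δ ^ d := by
        rw [Real.rpow_sub hδ, Real.rpow_natCast]
      have e2 : (2*r : ℝ)^d = 2^d * r^d := Real.mul_rpow (by norm_num) hr0.le
      have e3 : (b*δ : ℝ)^d = b^d * δ^d := Real.mul_rpow hb0.le hδ.le
      rw [e1, e2, e3]
      have hbd : (0:ℝ) < b ^ d := Real.rpow_pos_of_pos hb0 d
      have hδd : (0:ℝ) < δ ^ d := Real.rpow_pos_of_pos hδ d
      have h1d : ((1:ℝ)/b)^d = 1/(b^d) := by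
        rw [Real.div_rpow zero_le_one hb0.le, Real.one_rpow]
      rw [h1d]
      rw [show (2*(δ*(1+DK)):ℝ) = δ*(2*(1+DK)) by ring, mul_pow]
      field_simp
    calc (V.card : ℝ) * (2*(δ*(1+DK)))^k
        ≤ (M₀ * (2*r)^d / (b*δ)^d) * (2*(δ*(1+DK)))^k := by
          apply mul_le_mul_of_nonneg_right _ (by positivity)
          rw [le_div_iff₀ hbδd]
          exact hcard
      _ = c₄ * δ^((k:ℝ)-d) * r^d := hkey
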